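/- Let X be a Lévy process with Lévy measure Π satisfying Π(ℝ) > 0. Then P(X_t > 0) → 1 as t → ∞ if and only if X_t → +∞ in probability as t → ∞ (i.e. for every K ∈ ℝ, P(X_t ≤ K) → 0 as t → ∞). -/

import Mathlib

open MeasureTheory ProbabilityTheory Filter Set Function
open scoped ENNReal Topology

noncomputable section

variable {Ω : Type*} [MeasurableSpace Ω]

/-- The jump of a path `f` at time `t`: `Δf(t) = f(t) - f(t-)`. -/
def pathJump (f : ℝ → ℝ) (t : ℝ) : ℝ := f t - Function.leftLim f t

/-- `X` is a (real-valued) Lévy process under the probability measure `P`: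
it starts at `0`, has a.s. càdlàg paths on `[0,∞)`, stationary increments and
independent increments. -/
structure IsLevyProcess (P : Measure Ω) (X : ℝ → Ω → ℝ) : Prop where
  measurable : ∀ t : ℝ, Measurable (X t)
  init : ∀ᵐ ω ∂P, X 0 ω = 0
  cadlag : ∀ᵐ ω ∂P, ∀ t : ℝ, 0 ≤ t →
    ContinuousWithinAt (fun s => X s ω) (Ici t) t ∧
      (0 < t → ∃ l : ℝ, Tendsto (fun s => X s ω) (𝓝[<] t) (𝓝 l))
  stationary : ∀ s t : ℝ, 0 ≤ s → 0 ≤ t →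
    IdentDistrib (fun ω => X (s + t) ω - X s ω) (X t) P P
  indep : ∀ t : ℕ → ℝ, 0 ≤ t 0 → Monotone t →
    iIndepFun (fun i ω => X (t (i + 1)) ω - X (t i) ω) P

/-- `Pi` is the Lévy measure of `X` under `P`: for every Borel set `B` whose closure
does not contain `0`, `Pi B` is the expected number of times `t ∈ (0,1]` at which the
jump of `X` lies in `B`. -/
def IsLevyMeasureOf (Pi : Measure ℝ) (P : Measure Ω) (X : ℝ → Ω → ℝ) : Prop :=
  ∀ B : Set ℝ, MeasurableSet B → 0 ∉ closure B →
    Pi B = ∫⁻ ω, Measure.count {t : ℝ | t ∈ Ioc (0 : ℝ) 1 ∧ pathJump (fun s => X s ω) t ∈ B} ∂P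

/-- `τ` is (a.s.) the increasing enumeration of the times of the jumps of `X` lying in the
set `C`, with `τ 0 = 0`. -/
def IsJumpTimeEnum (P : Measure Ω) (X : ℝ → Ω → ℝ) (C : Set ℝ) (τ : ℕ → Ω → ℝ) : Prop :=
  ∀ᵐ ω ∂P, τ 0 ω = 0 ∧ StrictMono (fun n => τ n ω) ∧
    Tendsto (fun n => τ n ω) atTop atTop ∧
    ∀ t : ℝ, 0 < t → (pathJump (fun s => X s ω) t ∈ C ↔ ∃ n : ℕ, τ (n + 1) ω = t)

/-- `b` is regularly varying at `∞` with index `α`. -/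
def RegularlyVarying (α : ℝ) (b : ℝ → ℝ) : Prop :=
  Measurable b ∧ (∀ x : ℝ, 0 < x → 0 < b x) ∧
    ∀ l : ℝ, 0 < l → Tendsto (fun x => b (l * x) / b x) atTop (𝓝 (l ^ α))

/-!
Everything reduces to showing that `P(X_t ≤ 0) → 0` forces `P(X_t ≤ K) → 0`. Independence and
stationarity of increments give `P(X_s ≤ a) P(X_t ≤ b) ≤ P(X_{s+t} ≤ a + b)`.

If some `X_s` is negative with positive probability, iterating this inequality makes
`P(X_s ≤ -K) > 0` for some `s`, and then `P(X_t ≤ K) ≤ P(X_{s+t} ≤ 0) / P(X_s ≤ -K) → 0`.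

Otherwise every `X_t` is a.s. nonnegative, and some `X_{t₀}` is not a.s. zero, so
`q = E[e^{-X_{t₀}}] < 1`. As `t ↦ E[e^{-X_t}]` is multiplicative and bounded by `1`, the Chernoff
bound gives `P(X_t ≤ K) ≤ e^K q^⌊t/t₀⌋ → 0`.
-/

open Real

section Probability

variable {P : Measure Ω} [IsProbabilityMeasure P]

lemma tendsto_prob_compl_iff {ι : Type*} {l : Filter ι} {s : ι → Set Ω}
    (hs : ∀ i, MeasurableSet (s i)) :
    Tendsto (fun i => P (s i)ᶜ) l (𝓝 1) ↔ Tendsto (fun i => P (s i)) l (𝓝 0) := by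
  simp_rw [prob_compl_eq_one_sub (hs _)]
  constructor
  · intro h
    simpa [ENNReal.sub_sub_cancel ENNReal.one_ne_top prob_le_one] using
      ENNReal.Tendsto.sub tendsto_const_nhds h (Or.inl ENNReal.one_ne_top)
  · intro h
    simpa using ENNReal.Tendsto.sub tendsto_const_nhds h (Or.inl ENNReal.one_ne_top)

variable {Y : Ω → ℝ} {r : ℝ}

lemma prob_le_eq_one_of_ae_eq_const (hY : Measurable Y) {c : ℝ} (h : Y =ᵐ[P] fun _ => c) :
    P {ω | Y ω ≤ c} = 1 :=
  (mem_ae_iff_prob_eq_one (measurableSet_le hY measurable_const)).1 (h.mono fun _ => le_of_eq)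

lemma integrable_exp_mul_of_nonpos_of_ae_nonneg (hY : AEMeasurable Y P) (hr : r ≤ 0)
    (hnn : 0 ≤ᵐ[P] Y) : Integrable (fun ω => exp (r * Y ω)) P := by
  refine .of_bound (by fun_prop) 1 ?_
  filter_upwards [hnn] with ω hω
  rw [Real.norm_of_nonneg (exp_pos _).le, exp_le_one_iff]
  exact mul_nonpos_of_nonpos_of_nonneg hr hω

lemma mgf_le_one_of_ae_nonneg (hr : r ≤ 0) (hnn : 0 ≤ᵐ[P] Y) : mgf Y P r ≤ 1 := by
  simpa using mgf_anti_of_nonpos (X := fun _ => 0) hnn hr (integrable_const _)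

lemma mgf_lt_one_of_ae_nonneg (hY : AEMeasurable Y P) (hr : r < 0) (hnn : 0 ≤ᵐ[P] Y)
    (hne : ¬ Y =ᵐ[P] 0) : mgf Y P r < 1 := by
  have hint := integrable_exp_mul_of_nonpos_of_ae_nonneg hY hr.le hnn
  have hsupp : Function.support (fun ω => 1 - exp (r * Y ω)) = Function.support Y := by
    ext ω
    simp [sub_eq_zero, eq_comm (a := (1 : ℝ)), hr.ne]
  have hpos : 0 < ∫ ω, (1 - exp (r * Y ω)) ∂P := by
    rw [integral_pos_iff_support_of_nonneg_ae (f := fun ω => 1 - exp (r * Y ω)) ?_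
      ((integrable_const 1).sub hint), hsupp, pos_iff_ne_zero]
    · exact fun h => hne (ae_iff.2 h)
    · filter_upwards [hnn] with ω hω
      simpa using mul_nonpos_of_nonpos_of_nonneg hr.le hω
  rw [integral_sub (integrable_const 1) hint] at hpos
  simp only [integral_const, probReal_univ, smul_eq_mul, mul_one] at hpos
  exact sub_pos.1 hpos

end Probability

namespace IsLevyProcess

variable {P : Measure Ω} {X : ℝ → Ω → ℝ}

lemma indepFun_sub (hX : IsLevyProcess P X) {s t : ℝ} (hs : 0 ≤ s) (hst : s ≤ t) :
    X s ⟂ᵢ[P] fun ω => X t ω - X s ω := by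
  let times : ℕ → ℝ := fun n => if n = 0 then 0 else if n = 1 then s else t
  have hmono : Monotone times := by
    refine monotone_nat_of_le_succ fun n => ?_
    rcases n with _ | _ | n <;> simp [times, hs, hst]
  have h := (hX.indep times le_rfl hmono).indepFun (i := 0) (j := 1) zero_ne_one
  refine h.congr ?_ .rfl
  filter_upwards [hX.init] with ω h0
  simp [times, h0]

lemma measure_le_mul_measure_le_le (hX : IsLevyProcess P X) {s t : ℝ} (hs : 0 ≤ s)
    (ht : 0 ≤ t) (a b : ℝ) :
    P {ω | X s ω ≤ a} * P {ω | X t ω ≤ b} ≤ P {ω | X (s + t) ω ≤ a + b} := by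
  have hinc : P {ω | X (s + t) ω - X s ω ≤ b} = P {ω | X t ω ≤ b} :=
    (hX.stationary s t hs ht).measure_mem_eq measurableSet_Iic
  have hmul := (hX.indepFun_sub hs (le_add_of_nonneg_right ht)).measure_inter_preimage_eq_mul
    (Iic a) (Iic b) measurableSet_Iic measurableSet_Iic
  calc P {ω | X s ω ≤ a} * P {ω | X t ω ≤ b}
      = P (X s ⁻¹' Iic a ∩ (fun ω => X (s + t) ω - X s ω) ⁻¹' Iic b) := by
        rw [hmul, ← hinc]; rfl
    _ ≤ P {ω | X (s + t) ω ≤ a + b} := measure_mono fun ω ⟨ha, hb⟩ => by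
        simp only [mem_preimage, mem_Iic, mem_ofPred_eq] at ha hb ⊢
        linarith

lemma mgf_add (hX : IsLevyProcess P X) {s t : ℝ} (hs : 0 ≤ s) (ht : 0 ≤ t) (r : ℝ) :
    mgf (X (s + t)) P r = mgf (X s) P r * mgf (X t) P r := by
  have hsplit : X (s + t) = X s + fun ω => X (s + t) ω - X s ω := by
    ext ω; simp
  rw [hsplit, (hX.indepFun_sub hs (le_add_of_nonneg_right ht)).mgf_add'
    (hX.measurable s).aestronglyMeasurable
    ((hX.measurable _).sub (hX.measurable s)).aestronglyMeasurable,
    mgf_congr_identDistrib (hX.stationary s t hs ht)]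

variable [IsProbabilityMeasure P]

lemma measure_le_pow_le (hX : IsLevyProcess P X) {s : ℝ} (hs : 0 ≤ s) (a : ℝ) (n : ℕ) :
    P {ω | X s ω ≤ a} ^ n ≤ P {ω | X (n * s) ω ≤ n * a} := by
  induction n with
  | zero =>
    simpa using (prob_le_eq_one_of_ae_eq_const (hX.measurable 0) hX.init).ge
  | succ n ih =>
    calc P {ω | X s ω ≤ a} ^ (n + 1)
        ≤ P {ω | X (n * s) ω ≤ n * a} * P {ω | X s ω ≤ a} := by
          rw [pow_succ]; gcongr
      _ ≤ P {ω | X ((n + 1 : ℕ) * s) ω ≤ (n + 1 : ℕ) * a} := by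
          rw [Nat.cast_succ, add_one_mul, add_one_mul]
          exact hX.measure_le_mul_measure_le_le (by positivity) hs _ _

lemma exists_measure_le_pos_of_not_ae_nonneg (hX : IsLevyProcess P X) {s : ℝ} (hs : 0 ≤ s)
    (hneg : ¬ 0 ≤ᵐ[P] X s) (K : ℝ) : ∃ t, 0 ≤ t ∧ 0 < P {ω | X t ω ≤ K} := by
  obtain ⟨m, hm⟩ : ∃ m : ℕ, 0 < P {ω | X s ω ≤ -(1 / (m + 1))} := by
    by_contra! h
    refine hneg (ae_iff.2 (measure_mono_null (fun ω hω => ?_)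
      (measure_iUnion_null fun m => nonpos_iff_eq_zero.1 (h m))))
    obtain ⟨m, hm⟩ := exists_nat_one_div_lt (neg_pos.2 (not_le.1 hω))
    exact mem_iUnion.2 ⟨m, show X s ω ≤ _ by linarith⟩
  obtain ⟨n, hn⟩ := exists_nat_ge (-K * (m + 1))
  refine ⟨n * s, by positivity, (ENNReal.pow_pos hm n).trans_le ?_⟩
  refine (hX.measure_le_pow_le hs _ n).trans (measure_mono fun ω hω => ?_)
  have : n * -(1 / ((m : ℝ) + 1)) ≤ K := by
    rw [mul_neg, neg_le, ← div_eq_mul_one_div, le_div_iff₀ (by positivity)]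
    linarith
  exact (show X (n * s) ω ≤ _ from hω).trans this

lemma tendsto_measure_le_of_measure_le_neg_pos (hX : IsLevyProcess P X)
    (H : Tendsto (fun t => P {ω | X t ω ≤ 0}) atTop (𝓝 0)) {s K : ℝ} (hs : 0 ≤ s)
    (hpos : 0 < P {ω | X s ω ≤ -K}) :
    Tendsto (fun t => P {ω | X t ω ≤ K}) atTop (𝓝 0) := by
  set c := P {ω | X s ω ≤ -K}
  have hbound : ∀ᶠ t in atTop, P {ω | X t ω ≤ K} ≤ c⁻¹ * P {ω | X (s + t) ω ≤ 0} := by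
    filter_upwards [eventually_ge_atTop 0] with t ht
    rw [← ENNReal.mul_le_iff_le_inv hpos.ne' (measure_ne_top _ _), ← neg_add_cancel K]
    exact hX.measure_le_mul_measure_le_le hs ht _ _
  have hlim : Tendsto (fun t => c⁻¹ * P {ω | X (s + t) ω ≤ 0}) atTop (𝓝 0) := by
    simpa using ENNReal.Tendsto.const_mul
      (H.comp (tendsto_atTop_add_const_left _ s tendsto_id)) (.inr (ENNReal.inv_ne_top.2 hpos.ne'))
  exact tendsto_of_tendsto_of_tendsto_of_le_of_le' tendsto_const_nhds hlim
    (.of_forall fun _ => zero_le) hbound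

lemma mgf_nat_mul (hX : IsLevyProcess P X) {s : ℝ} (hs : 0 ≤ s) (r : ℝ) (n : ℕ) :
    mgf (X (n * s)) P r = mgf (X s) P r ^ n := by
  induction n with
  | zero =>
    simp only [Nat.cast_zero, zero_mul, pow_zero]
    rw [mgf_congr hX.init, mgf_const, mul_zero, exp_zero]
  | succ n ih =>
    rw [Nat.cast_succ, add_one_mul, hX.mgf_add (by positivity) hs, ih, pow_succ]

lemma tendsto_measure_le_of_ae_nonneg (hX : IsLevyProcess P X)
    (hnn : ∀ t, 0 ≤ t → 0 ≤ᵐ[P] X t) {t₀ : ℝ} (ht₀ : 0 ≤ t₀) (hne : ¬ X t₀ =ᵐ[P] 0)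
    (K : ℝ) :
    Tendsto (fun t => P {ω | X t ω ≤ K}) atTop (𝓝 0) := by
  set q := mgf (X t₀) P (-1)
  have hq : q < 1 :=
    mgf_lt_one_of_ae_nonneg (hX.measurable t₀).aemeasurable (by norm_num) (hnn t₀ ht₀) hne
  have ht₀_pos : 0 < t₀ := ht₀.lt_of_ne fun h => hne (h ▸ hX.init)
  have hbound : ∀ t, 0 ≤ t → P.real {ω | X t ω ≤ K} ≤ exp K * q ^ ⌊t / t₀⌋₊ := by
    intro t ht
    set n := ⌊t / t₀⌋₊
    have hn : n * t₀ ≤ t := (le_div_iff₀ ht₀_pos).1 (Nat.floor_le (by positivity))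
    have hmgf : mgf (X t) P (-1) ≤ q ^ n := by
      rw [← add_sub_cancel (n * t₀) t, hX.mgf_add (by positivity) (sub_nonneg.2 hn),
        hX.mgf_nat_mul ht₀]
      exact mul_le_of_le_one_right (pow_nonneg mgf_nonneg n)
        (mgf_le_one_of_ae_nonneg (by norm_num) (hnn _ (sub_nonneg.2 hn)))
    calc P.real {ω | X t ω ≤ K}
        ≤ exp (-(-1) * K) * mgf (X t) P (-1) :=
          measure_le_le_exp_mul_mgf K (by norm_num) (integrable_exp_mul_of_nonpos_of_ae_nonneg
            (hX.measurable t).aemeasurable (by norm_num) (hnn t ht))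
      _ ≤ exp K * q ^ n := by rw [neg_neg, one_mul]; gcongr
  have hlim : Tendsto (fun t => exp K * q ^ ⌊t / t₀⌋₊) atTop (𝓝 0) := by
    simpa using ((tendsto_pow_atTop_nhds_zero_of_lt_one mgf_nonneg hq).comp
      (tendsto_nat_floor_atTop.comp (tendsto_id.atTop_div_const ht₀_pos))).const_mul (exp K)
  rw [← ENNReal.tendsto_toReal_iff (fun _ => measure_ne_top _ _) ENNReal.zero_ne_top,
    ENNReal.toReal_zero]
  exact tendsto_of_tendsto_of_tendsto_of_le_of_le' tendsto_const_nhds hlim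
    (.of_forall fun _ => ENNReal.toReal_nonneg) ((eventually_ge_atTop 0).mono hbound)

theorem tendsto_measure_le_of_tendsto_measure_nonpos (hX : IsLevyProcess P X)
    (H : Tendsto (fun t => P {ω | X t ω ≤ 0}) atTop (𝓝 0)) (K : ℝ) :
    Tendsto (fun t => P {ω | X t ω ≤ K}) atTop (𝓝 0) := by
  by_cases hnn : ∀ t, 0 ≤ t → 0 ≤ᵐ[P] X t
  · obtain ⟨t₀, ht₀, hne⟩ : ∃ t₀, 0 ≤ t₀ ∧ ¬ X t₀ =ᵐ[P] 0 := by
      by_contra! h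
      have hone : ∀ᶠ t in atTop, P {ω | X t ω ≤ 0} = 1 :=
        (eventually_ge_atTop 0).mono fun t ht =>
          prob_le_eq_one_of_ae_eq_const (hX.measurable t) (h t ht)
      exact one_ne_zero (tendsto_nhds_unique ((tendsto_congr' hone).2 tendsto_const_nhds) H)
    exact hX.tendsto_measure_le_of_ae_nonneg hnn ht₀ hne K
  · push Not at hnn
    obtain ⟨s, hs, hneg⟩ := hnn
    obtain ⟨t, ht, hpos⟩ := hX.exists_measure_le_pos_of_not_ae_nonneg hs hneg (-K)
    exact hX.tendsto_measure_le_of_measure_le_neg_pos H ht hpos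

end IsLevyProcess

theorem levy_prob_pos_iff_tendsto_infty_in_prob_general
    (P : Measure Ω) [IsProbabilityMeasure P] (X : ℝ → Ω → ℝ)
    (hX : IsLevyProcess P X) :
    Tendsto (fun t : ℝ => P {ω | 0 < X t ω}) atTop (𝓝 1) ↔
      ∀ K : ℝ, Tendsto (fun t : ℝ => P {ω | X t ω ≤ K}) atTop (𝓝 0) := by
  have hcompl : ∀ t, {ω | 0 < X t ω} = {ω | X t ω ≤ 0}ᶜ := fun t => by ext; simp
  simp_rw [hcompl]
  rw [tendsto_prob_compl_iff fun t => measurableSet_le (hX.measurable t) measurable_const]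
  exact ⟨hX.tendsto_measure_le_of_tendsto_measure_nonpos, fun h => h 0⟩

/-- For a Lévy process `X` with `Π(ℝ) > 0`: `P(X_t > 0) → 1` as `t → ∞` if and only if
`X_t → +∞` in probability, i.e. `P(X_t ≤ K) → 0` for every `K`. -/
theorem levy_prob_pos_iff_tendsto_infty_in_prob
    (P : Measure Ω) [IsProbabilityMeasure P] (X : ℝ → Ω → ℝ) (Pi : Measure ℝ)
    (hX : IsLevyProcess P X) (hPi : IsLevyMeasureOf Pi P X)
    (hPipos : 0 < Pi Set.univ) :
    Tendsto (fun t : ℝ => P {ω | 0 < X t ω}) atTop (𝓝 1) ↔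
      ∀ K : ℝ, Tendsto (fun t : ℝ => P {ω | X t ω ≤ K}) atTop (𝓝 0) :=
  levy_prob_pos_iff_tendsto_infty_in_prob_general P X hX

end
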